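/- Let n ≥ 1, let U ⊆ ℝ^{n+1} be open, let h : U → Sym(n+1, ℝ) be C², and suppose g(x) := m + h(x) is invertible for every x ∈ U, where m = diag(−1, 1, …, 1). With g^{μν} the entries of g^{−1} and repeated indices μ, ν, λ, δ, α, β ∈ {0, …, n} summed, define Γ_{μνδ} := ∂_μ h_{δν} + ∂_ν h_{μδ} − ∂_δ h_{μν}, Γ^λ_{μν} := (1/2) g^{λδ} Γ_{μνδ}, Γ_μ := g^{αβ}( ∂_α h_{μβ} − (1/2) ∂_μ h_{αβ} ), R_{μν} := ∂_λ Γ^λ_{μν} − ∂_μ Γ^λ_{λν} + Γ^λ_{μν} Γ^δ_{λδ} − Γ^δ_{μλ} Γ^λ_{νδ}, E_{μν} := Γ^λ_{μν} Γ^δ_{λδ} − Γ^δ_{μλ} Γ^λ_{νδ} + (1/2)(∂_λ g^{λδ}) Γ_{μνδ} − (1/2)(∂_μ g^{λδ}) Γ_{λνδ}, D_{μν} := −(∂_μ g^{λδ})( ∂_λ h_{νδ} − (1/2) ∂_ν h_{λδ} ), and F_{μν} := 2E_{μν} + D_{μν} + D_{νμ}. Then on U, for all μ, ν ∈ {0,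 …, n}: R_{μν} = −(1/2) g^{λδ} ∂_λ∂_δ h_{μν} + (1/2) ∂_μ Γ_ν + (1/2) ∂_ν Γ_μ + (1/2) F_{μν}. -/

import Mathlib

noncomputable section

/-- Points of `ℝ^{1+n}`. -/
abbrev Pt (n : ℕ) := Fin (n + 1) → ℝ

/-- Partial derivative `∂_μ` of a real-valued function on `ℝ^{1+n}`. -/
def pd {n : ℕ} (μ : Fin (n + 1)) (f : Pt n → ℝ) (x : Pt n) : ℝ :=
  fderiv ℝ f x (Pi.single μ 1)

/-- The Minkowski matrix `m = diag(−1, 1, …, 1)`. -/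
def mink (n : ℕ) : Fin (n + 1) → Fin (n + 1) → ℝ :=
  fun μ ν => if μ = ν then (if μ = 0 then -1 else 1) else 0

/-- The perturbed metric `g = m + h` as a matrix. -/
def gmet {n : ℕ} (h : Pt n → Fin (n + 1) → Fin (n + 1) → ℝ) (x : Pt n) :
    Matrix (Fin (n + 1)) (Fin (n + 1)) ℝ :=
  Matrix.of fun μ ν => mink n μ ν + h x μ ν

/-- Components `g^{μν}` of the inverse metric. -/
def ginv {n : ℕ} (h : Pt n → Fin (n + 1) → Fin (n + 1) → ℝ) (x : Pt n)
    (μ ν : Fin (n + 1)) : ℝ :=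
  (gmet h x)⁻¹ μ ν

/-- `Γ_{μνδ} = ∂_μ h_{δν} + ∂_ν h_{μδ} − ∂_δ h_{μν}`. -/
def ΓL {n : ℕ} (h : Pt n → Fin (n + 1) → Fin (n + 1) → ℝ)
    (μ ν δ : Fin (n + 1)) (x : Pt n) : ℝ :=
  pd μ (fun y => h y δ ν) x + pd ν (fun y => h y μ δ) x - pd δ (fun y => h y μ ν) x

/-- `Γ^λ_{μν} = ½ g^{λδ} Γ_{μνδ}`. -/
def ΓU {n : ℕ} (h : Pt n → Fin (n + 1) → Fin (n + 1) → ℝ)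
    (l μ ν : Fin (n + 1)) (x : Pt n) : ℝ :=
  (1 / 2) * ∑ δ, ginv h x l δ * ΓL h μ ν δ x

/-- The harmonic gauge quantity `Γ_μ = g^{αβ}(∂_α h_{μβ} − ½ ∂_μ h_{αβ})`. -/
def Γone {n : ℕ} (h : Pt n → Fin (n + 1) → Fin (n + 1) → ℝ)
    (μ : Fin (n + 1)) (x : Pt n) : ℝ :=
  ∑ α, ∑ β, ginv h x α β *
    (pd α (fun y => h y μ β) x - (1 / 2) * pd μ (fun y => h y α β) x)

/-- The Ricci curvature
`R_{μν} = ∂_λ Γ^λ_{μν} − ∂_μ Γ^λ_{λν} + Γ^λ_{μν} Γ^δ_{λδ} − Γ^δ_{μλ} Γ^λ_{νδ}`. -/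
def Ric {n : ℕ} (h : Pt n → Fin (n + 1) → Fin (n + 1) → ℝ)
    (μ ν : Fin (n + 1)) (x : Pt n) : ℝ :=
  (∑ l, pd l (ΓU h l μ ν) x) - (∑ l, pd μ (ΓU h l l ν) x)
    + (∑ l, ∑ δ, ΓU h l μ ν x * ΓU h δ l δ x)
    - (∑ δ, ∑ l, ΓU h δ μ l x * ΓU h l ν δ x)

/-- `E_{μν} = Γ^λ_{μν}Γ^δ_{λδ} − Γ^δ_{μλ}Γ^λ_{νδ} + ½(∂_λ g^{λδ})Γ_{μνδ} − ½(∂_μ g^{λδ})Γ_{λνδ}`. -/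
def Emat {n : ℕ} (h : Pt n → Fin (n + 1) → Fin (n + 1) → ℝ)
    (μ ν : Fin (n + 1)) (x : Pt n) : ℝ :=
  (∑ l, ∑ δ, ΓU h l μ ν x * ΓU h δ l δ x)
    - (∑ δ, ∑ l, ΓU h δ μ l x * ΓU h l ν δ x)
    + (1 / 2) * ∑ l, ∑ δ, pd l (fun y => ginv h y l δ) x * ΓL h μ ν δ x
    - (1 / 2) * ∑ l, ∑ δ, pd μ (fun y => ginv h y l δ) x * ΓL h l ν δ x

/-- `D_{μν} = −(∂_μ g^{λδ})(∂_λ h_{νδ} − ½ ∂_ν h_{λδ})`. -/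
def Dmat {n : ℕ} (h : Pt n → Fin (n + 1) → Fin (n + 1) → ℝ)
    (μ ν : Fin (n + 1)) (x : Pt n) : ℝ :=
  -(∑ l, ∑ δ, pd μ (fun y => ginv h y l δ) x *
      (pd l (fun y => h y ν δ) x - (1 / 2) * pd ν (fun y => h y l δ) x))

/-- `F_{μν} = 2E_{μν} + D_{μν} + D_{νμ}`. -/
def Fmat {n : ℕ} (h : Pt n → Fin (n + 1) → Fin (n + 1) → ℝ)
    (μ ν : Fin (n + 1)) (x : Pt n) : ℝ :=
  2 * Emat h μ ν x + Dmat h μ ν x + Dmat h ν μ x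

/-!
Writing `∂_a∂_b h_{cd}` for the second derivatives, the product rule splits
`∂_λ Γ^λ_{μν} − ∂_μ Γ^λ_{λν}` into first-order terms, which together with the quadratic terms of
`R_{μν}` make up `E_{μν}`, and `½ g^{λδ}(∂_λ Γ_{μνδ} − ∂_μ Γ_{λνδ})`; likewise `∂_μ Γ_ν` splits into
`−D_{μν}` and a term linear in second derivatives. What remains is an identity between contractions
of `g^{λδ}` with second derivatives of `h`, which holds by the symmetry of `∂_a∂_b` (Schwarz), of
`h_{cd}` and of `g^{λδ}`.
-/

open Filter Topology

section PartialDerivative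

variable {n : ℕ} {x : Pt n} {f g : Pt n → ℝ}

theorem pd_add (μ : Fin (n + 1)) (hf : DifferentiableAt ℝ f x) (hg : DifferentiableAt ℝ g x) :
    pd μ (fun y => f y + g y) x = pd μ f x + pd μ g x := by
  simp only [pd, fderiv_fun_add hf hg, add_apply]

theorem pd_sub (μ : Fin (n + 1)) (hf : DifferentiableAt ℝ f x) (hg : DifferentiableAt ℝ g x) :
    pd μ (fun y => f y - g y) x = pd μ f x - pd μ g x := by
  simp only [pd, fderiv_fun_sub hf hg, sub_apply]

theorem pd_const_mul (μ : Fin (n + 1)) (c : ℝ) (hf : DifferentiableAt ℝ f x) :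
    pd μ (fun y => c * f y) x = c * pd μ f x := by
  simp only [pd, fderiv_const_mul hf c, smul_apply, smul_eq_mul]

theorem pd_mul (μ : Fin (n + 1)) (hf : DifferentiableAt ℝ f x) (hg : DifferentiableAt ℝ g x) :
    pd μ (fun y => f y * g y) x = pd μ f x * g x + f x * pd μ g x := by
  simp only [pd, fderiv_fun_mul hf hg, add_apply, smul_apply, smul_eq_mul]
  ring

theorem pd_sum {ι : Type*} (s : Finset ι) (μ : Fin (n + 1)) {F : ι → Pt n → ℝ}
    (hF : ∀ i ∈ s, DifferentiableAt ℝ (F i) x) :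
    pd μ (fun y => ∑ i ∈ s, F i y) x = ∑ i ∈ s, pd μ (F i) x := by
  simp only [pd, fderiv_fun_sum hF, sum_apply]

theorem pd_congr_of_eventuallyEq (μ : Fin (n + 1)) (hfg : f =ᶠ[𝓝 x] g) :
    pd μ f x = pd μ g x := by
  simp only [pd, hfg.fderiv_eq]

theorem differentiableAt_pd (μ : Fin (n + 1)) (hf : ContDiffAt ℝ 2 f x) :
    DifferentiableAt ℝ (pd μ f) x :=
  ((hf.fderiv_right (m := 1) (by norm_num)).differentiableAt one_ne_zero).clm_apply
    (differentiableAt_const _)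

theorem pd_pd_eq_fderiv_fderiv (μ ν : Fin (n + 1)) (hf : ContDiffAt ℝ 2 f x) :
    pd μ (pd ν f) x = fderiv ℝ (fderiv ℝ f) x (Pi.single μ 1) (Pi.single ν 1) := by
  have hdf : DifferentiableAt ℝ (fderiv ℝ f) x :=
    (hf.fderiv_right (m := 1) (by norm_num)).differentiableAt one_ne_zero
  change fderiv ℝ (fun y => fderiv ℝ f y (Pi.single ν 1)) x (Pi.single μ 1) = _
  rw [fderiv_clm_apply hdf (differentiableAt_const _)]
  simp

theorem pd_pd_comm (μ ν : Fin (n + 1)) (hf : ContDiffAt ℝ 2 f x) :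
    pd μ (pd ν f) x = pd ν (pd μ f) x := by
  rw [pd_pd_eq_fderiv_fderiv μ ν hf, pd_pd_eq_fderiv_fderiv ν μ hf]
  exact hf.isSymmSndFDerivAt (by simp) _ _

end PartialDerivative

section MatrixInverse

variable {𝕜 E ι : Type*} [NontriviallyNormedField 𝕜] [NormedAddCommGroup E] [NormedSpace 𝕜 E]
  [Fintype ι] [DecidableEq ι] {M : E → Matrix ι ι 𝕜} {x : E}

theorem differentiableAt_det (hM : ∀ i j, DifferentiableAt 𝕜 (fun y => M y i j) x) :
    DifferentiableAt 𝕜 (fun y => (M y).det) x := by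
  simp only [Matrix.det_apply, Units.smul_def, zsmul_eq_mul]
  exact DifferentiableAt.fun_sum fun σ _ => (differentiableAt_const _).mul
    (HasFDerivAt.finsetProd fun i _ => (hM (σ i) i).hasFDerivAt).differentiableAt

theorem differentiableAt_inv_apply (hM : ∀ i j, DifferentiableAt 𝕜 (fun y => M y i j) x)
    (hx : IsUnit (M x)) (i j : ι) :
    DifferentiableAt 𝕜 (fun y => (M y)⁻¹ i j) x := by
  -- Cramer's rule: `(M⁻¹)ᵢⱼ = (det M)⁻¹ · det (M with row j replaced by eᵢ)`.
  have hcramer : (fun y => (M y)⁻¹ i j)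
      = fun y => ((M y).det)⁻¹ * ((M y).updateRow j (Pi.single i 1)).det := by
    funext y
    rw [Matrix.inv_def, Matrix.smul_apply, Ring.inverse_eq_inv', smul_eq_mul,
      Matrix.adjugate_apply]
  have hrow : ∀ k l, DifferentiableAt 𝕜 (fun y => (M y).updateRow j (Pi.single i 1) k l) x := by
    intro k l
    by_cases hk : k = j
    · simp [hk]
    · simpa [hk] using hM k l
  rw [hcramer]
  exact ((differentiableAt_det hM).inv ((Matrix.isUnit_iff_isUnit_det _).mp hx).ne_zero).mul
    (differentiableAt_det hrow)

end MatrixInverse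

section Metric

variable {n : ℕ} {h : Pt n → Fin (n + 1) → Fin (n + 1) → ℝ} {x : Pt n}

theorem gmet_isSymm (hs : ∀ a b, h x a b = h x b a) : (gmet h x).IsSymm := by
  ext a b
  simp only [Matrix.transpose_apply, gmet, Matrix.of_apply, mink, hs b a, eq_comm (a := b)]
  split_ifs <;> simp_all

theorem ginv_comm (hs : ∀ a b, h x a b = h x b a) (a b : Fin (n + 1)) :
    ginv h x a b = ginv h x b a :=
  (gmet_isSymm hs).inv.apply b a

theorem differentiableAt_ginv (hh : ∀ a b, DifferentiableAt ℝ (fun y => h y a b) x)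
    (hx : IsUnit (gmet h x)) (a b : Fin (n + 1)) :
    DifferentiableAt ℝ (fun y => ginv h y a b) x :=
  differentiableAt_inv_apply (fun c d => (differentiableAt_const _).add (hh c d)) hx a b

end Metric

section Christoffel

variable {n : ℕ} {h : Pt n → Fin (n + 1) → Fin (n + 1) → ℝ} {x : Pt n}

theorem pd_pd_apply_comm (hs : ∀ᶠ y in 𝓝 x, ∀ a b, h y a b = h y b a) (a b c d : Fin (n + 1)) :
    pd a (pd b fun z => h z c d) x = pd a (pd b fun z => h z d c) x :=
  pd_congr_of_eventuallyEq a <| hs.eventually_nhds.mono fun _ hy =>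
    pd_congr_of_eventuallyEq b <| hy.mono fun _ hz => hz c d

variable (hh : ∀ a b, ContDiffAt ℝ 2 (fun y => h y a b) x)
include hh

theorem pd_ΓL (a b c d : Fin (n + 1)) :
    pd a (ΓL h b c d) x = pd a (pd b fun z => h z d c) x + pd a (pd c fun z => h z b d) x
      - pd a (pd d fun z => h z b c) x := by
  have hd : ∀ c a b, DifferentiableAt ℝ (pd c fun z => h z a b) x :=
    fun c a b => differentiableAt_pd c (hh a b)
  change pd a (fun y => pd b _ y + pd c _ y - pd d _ y) x = _
  rw [pd_sub a ((hd b d c).fun_add (hd c b d)) (hd d b c), pd_add a (hd b d c) (hd c b d)]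

variable (hx : IsUnit (gmet h x))
include hx

theorem pd_ΓU (a l b c : Fin (n + 1)) :
    pd a (ΓU h l b c) x = (1 / 2) * ∑ δ, (pd a (fun y => ginv h y l δ) x * ΓL h b c δ x
      + ginv h x l δ * pd a (ΓL h b c δ) x) := by
  have hg := differentiableAt_ginv (fun a b => (hh a b).differentiableAt two_ne_zero) hx
  have hΓ : ∀ δ, DifferentiableAt ℝ (ΓL h b c δ) x := fun δ =>
    ((differentiableAt_pd b (hh δ c)).add (differentiableAt_pd c (hh b δ))).sub
      (differentiableAt_pd δ (hh b c))
  have hterm : ∀ δ ∈ Finset.univ, DifferentiableAt ℝ (fun y => ginv h y l δ * ΓL h b c δ y) x :=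
    fun δ _ => (hg l δ).fun_mul (hΓ δ)
  change pd a (fun y => (1 / 2) * ∑ δ, ginv h y l δ * ΓL h b c δ y) x = _
  rw [pd_const_mul a _ (DifferentiableAt.fun_sum hterm), pd_sum _ a hterm]
  simp only [pd_mul a (hg l _) (hΓ _)]

theorem ric_eq_emat_add (μ ν : Fin (n + 1)) :
    Ric h μ ν x = Emat h μ ν x + (1 / 2) * ∑ l, ∑ δ, ginv h x l δ * pd l (ΓL h μ ν δ) x
      - (1 / 2) * ∑ l, ∑ δ, ginv h x l δ * pd μ (ΓL h l ν δ) x := by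
  simp only [Ric, Emat, pd_ΓU hh hx, Finset.sum_add_distrib, mul_add, Finset.mul_sum]
  ring

theorem pd_Γone (a c : Fin (n + 1)) :
    pd a (Γone h c) x = -Dmat h a c x + ∑ l, ∑ δ, ginv h x l δ *
      (pd a (pd l fun z => h z c δ) x - (1 / 2) * pd a (pd c fun z => h z l δ) x) := by
  have hg := differentiableAt_ginv (fun a b => (hh a b).differentiableAt two_ne_zero) hx
  have hd : ∀ c a b, DifferentiableAt ℝ (pd c fun z => h z a b) x :=
    fun c a b => differentiableAt_pd c (hh a b)
  have hS : ∀ α β, DifferentiableAt ℝ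
      (fun y => pd α (fun z => h z c β) y - 1 / 2 * pd c (fun z => h z α β) y) x :=
    fun α β => (hd α c β).fun_sub ((hd c α β).const_mul _)
  change pd a (fun y => ∑ α, ∑ β, ginv h y α β *
    (pd α (fun z => h z c β) y - 1 / 2 * pd c (fun z => h z α β) y)) x = _
  rw [pd_sum _ a fun α _ => DifferentiableAt.fun_sum fun β _ => (hg α β).fun_mul (hS α β)]
  simp only [pd_sum _ a fun β _ => (hg _ β).fun_mul (hS _ β), pd_mul a (hg _ _) (hS _ _),
    pd_sub a (hd _ c _) ((hd c _ _).const_mul _), pd_const_mul a _ (hd c _ _), Dmat,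
    Finset.sum_add_distrib, neg_neg]

end Christoffel

/-- The second-order part of `R_{μν}`, with `H a b c d` standing for `∂_a∂_b h_{cd}`. -/
theorem principal_part_identity {K ι : Type*} [Field K] [CharZero K] [Fintype ι]
    (G : ι → ι → K) (H : ι → ι → ι → ι → K) (hG : ∀ a b, G a b = G b a)
    (hH₁ : ∀ a b c d, H a b c d = H b a c d) (hH₂ : ∀ a b c d, H a b c d = H a b d c) (μ ν : ι) :
    ∑ l, ∑ δ, G l δ * (H l μ δ ν + H l ν μ δ - H l δ μ ν)
        - ∑ l, ∑ δ, G l δ * (H μ l δ ν + H μ ν l δ - H μ δ l ν)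
      = -∑ l, ∑ δ, G l δ * H l δ μ ν + ∑ l, ∑ δ, G l δ * (H μ l ν δ - 1 / 2 * H μ ν l δ)
        + ∑ l, ∑ δ, G l δ * (H ν l μ δ - 1 / 2 * H ν μ l δ) := by
  have hswap : ∑ l, ∑ δ, G l δ * H μ δ l ν = ∑ l, ∑ δ, G l δ * H μ l ν δ := by
    rw [Finset.sum_comm]
    exact Finset.sum_congr rfl fun l _ => Finset.sum_congr rfl fun δ _ => by rw [hG, hH₂]
  calc
    _ = -∑ l, ∑ δ, G l δ * H l δ μ ν + ∑ l, ∑ δ, G l δ * (H μ l ν δ - 1 / 2 * H μ ν l δ)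
        + ∑ l, ∑ δ, G l δ * (H ν l μ δ - 1 / 2 * H ν μ l δ)
        + (∑ l, ∑ δ, G l δ * H μ δ l ν - ∑ l, ∑ δ, G l δ * H μ l ν δ) := by
      simp only [← Finset.sum_sub_distrib, ← Finset.sum_add_distrib, ← Finset.sum_neg_distrib]
      refine Finset.sum_congr rfl fun l _ => Finset.sum_congr rfl fun δ _ => ?_
      linear_combination G l δ * hH₁ l μ δ ν + G l δ * hH₁ l ν μ δ + G l δ / 2 * hH₁ ν μ l δ
    _ = _ := by rw [hswap, sub_self, add_zero]

theorem stmt19_general (n : ℕ) (U : Set (Pt n)) (hU : IsOpen U)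
    (h : Pt n → Fin (n + 1) → Fin (n + 1) → ℝ)
    (hC2 : ContDiffOn ℝ 2 h U)
    (hsymm : ∀ x ∈ U, ∀ μ ν, h x μ ν = h x ν μ)
    (hinv : ∀ x ∈ U, IsUnit (gmet h x)) :
    ∀ x ∈ U, ∀ μ ν : Fin (n + 1),
      Ric h μ ν x =
        -(1 / 2) * (∑ l, ∑ δ, ginv h x l δ *
            pd l (fun y => pd δ (fun z => h z μ ν) y) x)
          + (1 / 2) * pd μ (Γone h ν) x + (1 / 2) * pd ν (Γone h μ) x
          + (1 / 2) * Fmat h μ ν x := by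
  intro x hx μ ν
  have hh : ∀ a b, ContDiffAt ℝ 2 (fun y => h y a b) x := fun a b =>
    contDiffAt_pi.1 (contDiffAt_pi.1 ((hC2 x hx).contDiffAt (hU.mem_nhds hx)) a) b
  have hs : ∀ᶠ y in 𝓝 x, ∀ a b, h y a b = h y b a := eventually_of_mem (hU.mem_nhds hx) hsymm
  have hprincipal := principal_part_identity (ginv h x)
    (fun a b c d => pd a (pd b fun z => h z c d) x) (ginv_comm (hsymm x hx))
    (fun a b c d => pd_pd_comm a b (hh c d)) (pd_pd_apply_comm hs) μ ν
  rw [ric_eq_emat_add hh (hinv x hx), pd_Γone hh (hinv x hx), pd_Γone hh (hinv x hx), Fmat]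
  simp only [pd_ΓL hh]
  linear_combination (1 / 2) * hprincipal

theorem stmt19 (n : ℕ) (hn : 1 ≤ n) (U : Set (Pt n)) (hU : IsOpen U)
    (h : Pt n → Fin (n + 1) → Fin (n + 1) → ℝ)
    (hC2 : ContDiffOn ℝ 2 h U)
    (hsymm : ∀ x ∈ U, ∀ μ ν, h x μ ν = h x ν μ)
    (hinv : ∀ x ∈ U, IsUnit (gmet h x)) :
    ∀ x ∈ U, ∀ μ ν : Fin (n + 1),
      Ric h μ ν x =
        -(1 / 2) * (∑ l, ∑ δ, ginv h x l δ *
            pd l (fun y => pd δ (fun z => h z μ ν) y) x)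
          + (1 / 2) * pd μ (Γone h ν) x + (1 / 2) * pd ν (Γone h μ) x
          + (1 / 2) * Fmat h μ ν x :=
  stmt19_general n U hU h hC2 hsymm hinv
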